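/- arXiv:1204.0957 — 7 statements merged into one kernel-verified Lean document; each statement's English description precedes it below -/
import Mathlib

section
/- The matrices T_a = (−1,a)(−1,a)ᵀ and U_b = (1,b)(1,b)ᵀ for a, b ∈ {0,1}^n are positive semidefinite, and hence the 2^n × 2^n matrix M with M_{a,b} = (1 − aᵀb)² admits a PSD-factorization of rank n+1. -/
/-- The 0/1 real vector associated to a Boolean vector. -/
def bvec {n : ℕ} (a : Fin n → Bool) : Fin n → ℝ := fun i => if a i then 1 else 0

open Matrix

lemma Matrix.sum_vecMulVec_self_mul_vecMulVec_self {ι R : Type*} [Fintype ι] [CommSemiring R]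
    (v w : ι → R) :
    ∑ i, ∑ j, vecMulVec v v i j * vecMulVec w w i j = (v ⬝ᵥ w) ^ 2 := by
  simp only [vecMulVec_apply, dotProduct, sq, Fintype.sum_mul_sum]
  exact Fintype.sum_congr _ _ fun i => Fintype.sum_congr _ _ fun j => by ring

lemma Matrix.posSemidef_vecMulVec_self {ι : Type*} [Fintype ι] (v : ι → ℝ) :
    (vecMulVec v v).PosSemidef := by
  simpa using posSemidef_vecMulVec_self_star v

lemma cons_neg_one_dotProduct_cons_one {n : ℕ} (x y : Fin n → ℝ) :
    (Fin.cons (-1) x : Fin (n + 1) → ℝ) ⬝ᵥ Fin.cons 1 y = -(1 - x ⬝ᵥ y) := by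
  rw [← vecCons, ← vecCons, cons_dotProduct_cons]
  ring

/-- The matrices `T_a = (−1,a)(−1,a)ᵀ` and `U_b = (1,b)(1,b)ᵀ` for `a, b ∈ {0,1}ⁿ`
are positive semidefinite, and hence the `2ⁿ × 2ⁿ` matrix `M` with
`M_{a,b} = (1 − aᵀb)²` admits a PSD-factorization of rank `n+1`. -/
theorem psd_factorization_udisj_sq (n : ℕ) :
    ∃ T U : (Fin n → Bool) → Matrix (Fin (n+1)) (Fin (n+1)) ℝ,
      (∀ a, T a = Matrix.vecMulVec (Fin.cons (-1) (bvec a)) (Fin.cons (-1) (bvec a))) ∧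
      (∀ b, U b = Matrix.vecMulVec (Fin.cons 1 (bvec b)) (Fin.cons 1 (bvec b))) ∧
      (∀ a, (T a).PosSemidef) ∧ (∀ b, (U b).PosSemidef) ∧
      (∀ a b : Fin n → Bool,
        ∑ i, ∑ j, T a i j * U b i j = (1 - ∑ i, bvec a i * bvec b i) ^ 2) := by
  refine ⟨fun a => vecMulVec (Fin.cons (-1) (bvec a)) (Fin.cons (-1) (bvec a)),
    fun b => vecMulVec (Fin.cons 1 (bvec b)) (Fin.cons 1 (bvec b)),
    fun _ => rfl, fun _ => rfl,
    fun _ => posSemidef_vecMulVec_self _, fun _ => posSemidef_vecMulVec_self _, fun a b => ?_⟩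
  rw [sum_vecMulVec_self_mul_vecMulVec_self, cons_neg_one_dotProduct_cons_one, neg_sq]
  rfl
end

section
/- Let P ⊆ Q ⊆ ℝ^d be polyhedra and suppose S^{P,Q} = T·U is a rank-r nonnegative factorization of a slack matrix of the pair P, Q (w.r.t. generating points v_j of P and inequalities A_i x ≤ b_i of Q). Then the polyhedron K = {x : ∃ y ≥ 0, A x + T y = b} satisfies P ⊆ K ⊆ Q. Consequently, xc(P,Q) ≤ nnegrk(S^{P,Q}). -/
/-- The nonnegative rank of a real matrix. -/
noncomputable def nnegRank {α β : Type*} [Fintype α] [Fintype β] (M : Matrix α β ℝ) : ℕ :=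
  sInf {r : ℕ | ∃ T : Matrix α (Fin r) ℝ, ∃ U : Matrix (Fin r) β ℝ,
    (∀ i j, 0 ≤ T i j) ∧ (∀ i j, 0 ≤ U i j) ∧ M = T * U}

/-- The extension complexity of a pair of nested sets `P ⊆ Q ⊆ ℝ^d`: the minimum `r`
such that some system `E x + F y = g`, `y ∈ ℝ^r`, `y ≥ 0` projects to a set `K`
with `P ⊆ K ⊆ Q`. -/
noncomputable def xcPair (d : ℕ) (P Q : Set (Fin d → ℝ)) : ℕ :=
  sInf {r : ℕ | ∃ p : ℕ, ∃ E : Matrix (Fin p) (Fin d) ℝ, ∃ F : Matrix (Fin p) (Fin r) ℝ,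
    ∃ g : Fin p → ℝ,
      P ⊆ {x | ∃ y : Fin r → ℝ, (∀ k, 0 ≤ y k) ∧ E.mulVec x + F.mulVec y = g} ∧
      {x | ∃ y : Fin r → ℝ, (∀ k, 0 ≤ y k) ∧ E.mulVec x + F.mulVec y = g} ⊆ Q}

/-!
Write `S = T U` with `T, U ≥ 0`. Column `j` of `U` certifies `A v_j + T U_j = b`, so every
generator of `P` lies in `K = {x : ∃ y ≥ 0, A x + T y = b}`, and `K` is convex, hence contains `P`.
Conversely `A x = b - T y ≤ b` for `y ≥ 0` because `T ≥ 0`, so `K ⊆ Q`. Applied to a nonnegative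
factorization of minimal inner dimension, `K` is an extension of size `nnegrk S`.
-/

open Matrix

section ExtensionProjection

variable {ι κ α : Type*} [Fintype κ] [Fintype α]

def extensionProjection (E : Matrix ι α ℝ) (F : Matrix ι κ ℝ) (g : ι → ℝ) : Set (α → ℝ) :=
  {x | ∃ y : κ → ℝ, (∀ k, 0 ≤ y k) ∧ E *ᵥ x + F *ᵥ y = g}

theorem convex_extensionProjection (E : Matrix ι α ℝ) (F : Matrix ι κ ℝ) (g : ι → ℝ) :
    Convex ℝ (extensionProjection E F g) := by
  rintro x₁ ⟨y₁, hy₁, he₁⟩ x₂ ⟨y₂, hy₂, he₂⟩ a c ha hc hac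
  refine ⟨a • y₁ + c • y₂, fun k => ?_, ?_⟩
  · simpa using add_nonneg (mul_nonneg ha (hy₁ k)) (mul_nonneg hc (hy₂ k))
  · calc E *ᵥ (a • x₁ + c • x₂) + F *ᵥ (a • y₁ + c • y₂)
        = a • (E *ᵥ x₁ + F *ᵥ y₁) + c • (E *ᵥ x₂ + F *ᵥ y₂) := by
          simp only [mulVec_add, mulVec_smul, smul_add]; abel
      _ = g := by rw [he₁, he₂, ← add_smul, hac, one_smul]

theorem extensionProjection_subset_of_nonneg (E : Matrix ι α ℝ) {F : Matrix ι κ ℝ} (g : ι → ℝ)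
    (hF : ∀ i k, 0 ≤ F i k) : extensionProjection E F g ⊆ {x | ∀ i, (E *ᵥ x) i ≤ g i} := by
  rintro x ⟨y, hy, he⟩ i
  have hFy : 0 ≤ (F *ᵥ y) i := Finset.sum_nonneg fun k _ => mul_nonneg (hF i k) (hy k)
  have hi := congrFun he i
  simp only [Pi.add_apply] at hi
  linarith

end ExtensionProjection

def slackMatrix {ι α β : Type*} [Fintype α] (A : Matrix ι α ℝ) (b : ι → ℝ) (v : β → α → ℝ) :
    Matrix ι β ℝ :=
  Matrix.of fun i j => b i - (A *ᵥ v j) i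

section SlackFactorization

variable {ι κ α β : Type*} [Fintype κ] [Fintype α]
  {A : Matrix ι α ℝ} {b : ι → ℝ} {v : β → α → ℝ} {T : Matrix ι κ ℝ} {U : Matrix κ β ℝ}

theorem mem_extensionProjection_of_slackMatrix_eq_mul (hU : ∀ k j, 0 ≤ U k j)
    (hS : slackMatrix A b v = T * U) (j : β) : v j ∈ extensionProjection A T b := by
  refine ⟨fun k => U k j, fun k => hU k j, funext fun i => ?_⟩
  have hij := congrFun (congrFun hS i) j
  simp only [slackMatrix, of_apply, mul_apply] at hij
  show (A *ᵥ v j) i + ∑ k, T i k * U k j = b i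
  linarith

theorem convexHull_subset_extensionProjection_of_slackMatrix_eq_mul (hU : ∀ k j, 0 ≤ U k j)
    (hS : slackMatrix A b v = T * U) :
    convexHull ℝ (Set.range v) ⊆ extensionProjection A T b :=
  convexHull_min (Set.range_subset_iff.2 (mem_extensionProjection_of_slackMatrix_eq_mul hU hS))
    (convex_extensionProjection A T b)

end SlackFactorization

theorem exists_nonneg_factorization_nnegRank {α β : Type*} [Fintype α] [Fintype β]
    {M : Matrix α β ℝ} {r : ℕ} {T : Matrix α (Fin r) ℝ} {U : Matrix (Fin r) β ℝ}
    (hT : ∀ i k, 0 ≤ T i k) (hU : ∀ k j, 0 ≤ U k j) (hM : M = T * U) :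
    ∃ (T' : Matrix α (Fin (nnegRank M)) ℝ) (U' : Matrix (Fin (nnegRank M)) β ℝ),
      (∀ i k, 0 ≤ T' i k) ∧ (∀ k j, 0 ≤ U' k j) ∧ M = T' * U' :=
  Nat.sInf_mem (s := {r | ∃ (T : Matrix α (Fin r) ℝ) (U : Matrix (Fin r) β ℝ),
    (∀ i k, 0 ≤ T i k) ∧ (∀ k j, 0 ≤ U k j) ∧ M = T * U}) ⟨r, T, U, hT, hU, hM⟩

theorem xcPair_le_of_extensionProjection {d p r : ℕ} {P Q : Set (Fin d → ℝ)}
    {E : Matrix (Fin p) (Fin d) ℝ} {F : Matrix (Fin p) (Fin r) ℝ} {g : Fin p → ℝ}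
    (hP : P ⊆ extensionProjection E F g) (hQ : extensionProjection E F g ⊆ Q) :
    xcPair d P Q ≤ r :=
  Nat.sInf_le ⟨p, E, F, g, hP, hQ⟩

theorem xcPair_le_nnegRank_slackMatrix {d m n r : ℕ} {A : Matrix (Fin m) (Fin d) ℝ}
    {b : Fin m → ℝ} {v : Fin n → Fin d → ℝ} {T : Matrix (Fin m) (Fin r) ℝ}
    {U : Matrix (Fin r) (Fin n) ℝ} (hT : ∀ i k, 0 ≤ T i k) (hU : ∀ k j, 0 ≤ U k j)
    (hS : slackMatrix A b v = T * U) :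
    xcPair d (convexHull ℝ (Set.range v)) {x | ∀ i, (A *ᵥ x) i ≤ b i} ≤
      nnegRank (slackMatrix A b v) := by
  obtain ⟨T', U', hT', hU', hS'⟩ := exists_nonneg_factorization_nnegRank hT hU hS
  exact xcPair_le_of_extensionProjection
    (convexHull_subset_extensionProjection_of_slackMatrix_eq_mul hU' hS')
    (extensionProjection_subset_of_nonneg A b hT')

/-- If `S^{P,Q} = T·U` is a rank-`r` nonnegative factorization of a slack matrix of the
pair `P = conv{v_j}`, `Q = {x : A x ≤ b}`, then the polyhedron
`K = {x : ∃ y ≥ 0, A x + T y = b}` satisfies `P ⊆ K ⊆ Q`.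
Consequently `xc(P,Q) ≤ nnegrk(S^{P,Q})`. -/
theorem slack_factorization_gives_EF {d m n : ℕ}
    (A : Matrix (Fin m) (Fin d) ℝ) (b : Fin m → ℝ) (v : Fin n → Fin d → ℝ)
    (r : ℕ) (T : Matrix (Fin m) (Fin r) ℝ) (U : Matrix (Fin r) (Fin n) ℝ)
    (hT : ∀ i k, 0 ≤ T i k) (hU : ∀ k j, 0 ≤ U k j)
    (hfact : ∀ i j, b i - A.mulVec (v j) i = ∑ k, T i k * U k j) :
    (convexHull ℝ (Set.range v) ⊆
        {x : Fin d → ℝ | ∃ y : Fin r → ℝ, (∀ k, 0 ≤ y k) ∧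
          ∀ i, A.mulVec x i + ∑ k, T i k * y k = b i}) ∧
    ({x : Fin d → ℝ | ∃ y : Fin r → ℝ, (∀ k, 0 ≤ y k) ∧
          ∀ i, A.mulVec x i + ∑ k, T i k * y k = b i} ⊆
        {x | ∀ i, A.mulVec x i ≤ b i}) ∧
    xcPair d (convexHull ℝ (Set.range v)) {x | ∀ i, A.mulVec x i ≤ b i} ≤
      nnegRank (Matrix.of fun i j => b i - A.mulVec (v j) i) := by
  have hS : slackMatrix A b v = T * U := Matrix.ext hfact
  have hK : {x : Fin d → ℝ | ∃ y : Fin r → ℝ, (∀ k, 0 ≤ y k) ∧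
      ∀ i, A.mulVec x i + ∑ k, T i k * y k = b i} = extensionProjection A T b :=
    Set.ext fun _ => exists_congr fun _ => and_congr_right' funext_iff.symm
  rw [hK]
  exact ⟨convexHull_subset_extensionProjection_of_slackMatrix_eq_mul hU hS,
    extensionProjection_subset_of_nonneg A b hT, xcPair_le_nnegRank_slackMatrix hT hU hS⟩
end

section
/- Let P ⊆ Q ⊆ ℝ^d be polytopes and suppose E x + F y = g, y ≥ 0 (y ∈ ℝ^r) defines a polyhedron projecting to K with P ⊆ K ⊆ Q. Then the slack matrix S^{P,Q} (w.r.t. any vertex description of P and inequality description of Q) admits a nonnegative factorization of rank at most r + 1, i.e., nnegrk(S^{P,Q}) ≤ xc(P,Q) + 1. -/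
open Finset Matrix

section Cone

variable {V : Type*} [AddCommGroup V] [Module ℝ V] {ι : Type*} [Fintype ι]

lemma Fintype.linearCombination_subtype_eq (w : ι → V) (S : Finset ι) {c : ι → ℝ}
    (hc : ∀ i ∉ S, c i = 0) :
    Fintype.linearCombination ℝ (fun i : S => w i) (fun i => c i) =
      Fintype.linearCombination ℝ w c := by
  simp only [Fintype.linearCombination_apply]
  rw [Finset.sum_coe_sort S (fun i => c i • w i)]
  exact Finset.sum_subset (subset_univ S) fun i _ hi => by simp [hc i hi]

lemma exists_nonneg_linearCombination_eq_support_card_lt (w : ι → V)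
    {c : ι → ℝ} (hc : 0 ≤ c) (hdep : ¬ LinearIndepOn ℝ w ↑({i | c i ≠ 0} : Finset ι)) :
    ∃ c' : ι → ℝ, 0 ≤ c' ∧ Fintype.linearCombination ℝ w c' = Fintype.linearCombination ℝ w c ∧
      #{i | c' i ≠ 0} < #{i | c i ≠ 0} := by
  classical
  set S : Finset ι := {i | c i ≠ 0}
  obtain ⟨f, hf, i₀, hi₀, hfi₀⟩ := not_linearIndepOn_finset_iff.mp hdep
  wlog hpos : 0 < f i₀ generalizing f
  · exact this (-f) (by simp [hf]) (by simpa using hfi₀)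
      (neg_pos.mpr (lt_of_le_of_ne (not_lt.mp hpos) hfi₀))
  set G : ι → ℝ := fun i => if i ∈ S then f i else 0
  have hG : Fintype.linearCombination ℝ w G = 0 := by
    simpa [G, Fintype.linearCombination_apply, ite_smul, Finset.sum_ite_mem] using hf
  obtain ⟨i₁, hi₁, hmin⟩ := Finset.exists_min_image {i | 0 < G i} (fun i => c i / G i)
    ⟨i₀, by simp [G, hi₀, hpos]⟩
  rw [Finset.mem_filter] at hi₁
  have hi₁S : i₁ ∈ S := by by_contra h; simp [G, h] at hi₁
  set t := c i₁ / G i₁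
  have ht : 0 ≤ t := div_nonneg (hc i₁) hi₁.2.le
  refine ⟨c - t • G, fun i => ?_, by simp [hG], Finset.card_lt_card ?_⟩
  · by_cases hGi : 0 < G i
    · have := (le_div_iff₀ hGi).mp (hmin i (by simp [hGi]))
      simp only [Pi.zero_apply, Pi.sub_apply, Pi.smul_apply, smul_eq_mul]
      linarith
    · have := mul_nonpos_of_nonneg_of_nonpos ht (not_lt.mp hGi)
      have hci : 0 ≤ c i := hc i
      simp only [Pi.zero_apply, Pi.sub_apply, Pi.smul_apply, smul_eq_mul]
      linarith
  · refine (Finset.ssubset_iff_of_subset fun i hi => ?_).mpr ⟨i₁, hi₁S, ?_⟩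
    · by_contra hiS
      simp_all [G, S]
    · simp [t, div_mul_cancel₀ _ hi₁.2.ne']

theorem exists_linearIndepOn_of_mem_image_Ici (w : ι → V) {x : V}
    (hx : x ∈ Fintype.linearCombination ℝ w '' Set.Ici 0) :
    ∃ S : Finset ι, LinearIndepOn ℝ w ↑S ∧
      x ∈ Fintype.linearCombination ℝ (fun i : S => w i) '' Set.Ici 0 := by
  classical
  obtain ⟨c, ⟨hc, rfl⟩, hmin⟩ :=
    (measure fun c : ι → ℝ => #{i | c i ≠ 0}).wf.has_min _ hx
  refine ⟨({i | c i ≠ 0} : Finset ι), ?_, fun i => c i, fun i => hc i,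
    Fintype.linearCombination_subtype_eq w _ fun i hi => by simpa using hi⟩
  by_contra hdep
  obtain ⟨c', hc', hsum, hlt⟩ := exists_nonneg_linearCombination_eq_support_card_lt w hc hdep
  exact hmin c' ⟨hc', hsum⟩ hlt

variable [TopologicalSpace V] [IsTopologicalAddGroup V] [ContinuousSMul ℝ V] [T2Space V]

theorem isClosed_image_Ici_linearCombination (w : ι → V) :
    IsClosed (Fintype.linearCombination ℝ w '' Set.Ici 0) := by
  classical
  have hunion : Fintype.linearCombination ℝ w '' Set.Ici 0 = ⋃ (S : Finset ι)
      (_ : LinearIndepOn ℝ w ↑S), Fintype.linearCombination ℝ (fun i : S => w i) '' Set.Ici 0 := by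
    ext x
    simp only [Set.mem_iUnion, exists_prop]
    refine ⟨exists_linearIndepOn_of_mem_image_Ici w, ?_⟩
    rintro ⟨S, -, c, hc, rfl⟩
    refine ⟨fun i => if h : i ∈ S then c ⟨i, h⟩ else 0, fun i => ?_, ?_⟩
    · by_cases h : i ∈ S
      · simpa [h] using hc ⟨i, h⟩
      · simp [h]
    · rw [← Fintype.linearCombination_subtype_eq w S fun i hi => dif_neg hi]
      simp
  rw [hunion]
  refine isClosed_iUnion_of_finite fun S => isClosed_iUnion_of_finite fun hS => ?_
  have hinj : LinearMap.ker (Fintype.linearCombination ℝ fun i : S => w i) = ⊥ :=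
    LinearMap.ker_eq_bot.mpr (linearIndependent_iff_injective_fintypeLinearCombination.mp hS)
  exact (LinearMap.isClosedEmbedding_of_injective hinj).isClosedMap _ isClosed_Ici

theorem mem_image_Ici_linearCombination_of_forall_dual [LocallyConvexSpace ℝ V] (w : ι → V)
    {x : V} (h : ∀ f : StrongDual ℝ V, (∀ i, 0 ≤ f (w i)) → 0 ≤ f x) :
    x ∈ Fintype.linearCombination ℝ w '' Set.Ici 0 := by
  classical
  by_contra hx
  let C : ProperCone ℝ V :=
    { toSubmodule := (PointedCone.positive ℝ (ι → ℝ)).map (Fintype.linearCombination ℝ w)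
      isClosed' := isClosed_image_Ici_linearCombination w }
  obtain ⟨f, hfC, hfx⟩ := C.hyperplane_separation_point (x₀ := x) hx
  exact hfx.not_ge (h f fun i => hfC _
    ⟨Pi.single i 1, by simp, by simp [Fintype.linearCombination_apply]⟩)

end Cone

lemma ContinuousLinearMap.apply_eq_dotProduct {σ : Type*} [Fintype σ] [DecidableEq σ]
    (f : StrongDual ℝ (σ → ℝ)) (u : σ → ℝ) : f u = u ⬝ᵥ fun s => f (Pi.single s 1) := by
  conv_lhs => rw [pi_eq_sum_univ' u, map_sum]
  simp [dotProduct]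

lemma nonpos_of_forall_add_mul_le {c d β : ℝ} (h : ∀ t : ℝ, 0 ≤ t → c + t * d ≤ β) : d ≤ 0 := by
  by_contra! hd
  have hc := h 0 le_rfl
  have := h ((β - c + 1) / d) (div_nonneg (by linarith) hd.le)
  rw [div_mul_cancel₀ _ hd.ne'] at this
  linarith

namespace Matrix

variable {κ ι ρ : Type*} [Fintype κ] [Fintype ι] [Fintype ρ]

theorem exists_vecMul_eq_and_le_vecMul (E : Matrix κ ι ℝ) (F : Matrix κ ρ ℝ) (a : ι → ℝ)
    (h : ρ → ℝ) (hvalid : ∀ x y, 0 ≤ y → E *ᵥ x + F *ᵥ y = 0 → a ⬝ᵥ x + h ⬝ᵥ y ≤ 0) :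
    ∃ μ : κ → ℝ, μ ᵥ* E = a ∧ h ≤ μ ᵥ* F := by
  classical
  set M := fromCols E F
  -- The cone spanned by `w` is `{Sum.elim (μ ᵥ* E) (μ ᵥ* F - s) | s ≥ 0}`.
  let w : κ ⊕ κ ⊕ ρ → ι ⊕ ρ → ℝ
    | .inl j => M j
    | .inr (.inl j) => -M j
    | .inr (.inr k) => -Pi.single (.inr k) 1
  obtain ⟨c, hc, hcw⟩ := mem_image_Ici_linearCombination_of_forall_dual w
      (x := Sum.elim a h) fun f hf => by
    set z : ι ⊕ ρ → ℝ := fun s => f (Pi.single s 1)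
    have hfz : ∀ u, f u = u ⬝ᵥ z := f.apply_eq_dotProduct
    simp only [hfz] at hf ⊢
    have hMz : M *ᵥ z = 0 := funext fun j => le_antisymm
      (by have := hf (.inr (.inl j)); simp only [w, neg_dotProduct, neg_nonneg] at this; exact this)
      (hf (.inl j))
    have hEF : E *ᵥ (z ∘ .inl) + F *ᵥ (z ∘ .inr) = 0 := by simpa [M] using hMz
    have hz : ∀ k, z (.inr k) ≤ 0 := fun k => by simpa [w] using hf (.inr (.inr k))
    have := hvalid (-(z ∘ .inl)) (-(z ∘ .inr)) (fun k => by simpa using hz k)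
      (by rw [mulVec_neg, mulVec_neg, ← neg_add, hEF, neg_zero])
    rw [← Sum.elim_comp_inl_inr z, sumElim_dotProduct_sumElim]
    simp only [dotProduct_neg] at this
    linarith
  set μ : κ → ℝ := c ∘ .inl - c ∘ .inr ∘ .inl
  have key : Sum.elim (μ ᵥ* E) (μ ᵥ* F - c ∘ .inr ∘ .inr) = Sum.elim a h := by
    rw [← hcw]
    ext (l | k) <;> simp [w, M, μ, Fintype.linearCombination_apply, Fintype.sum_sum_type,
      vecMul, dotProduct, Pi.single_apply, sub_mul, Finset.sum_sub_distrib] <;> ring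
  refine ⟨μ, funext fun l => congrFun key (.inl l), fun k => ?_⟩
  rw [← show (μ ᵥ* F - c ∘ .inr ∘ .inr) k = h k from congrFun key (.inr k)]
  exact sub_le_self _ (hc (.inr (.inr k)))

theorem exists_vecMul_eq_of_forall_dotProduct_le (E : Matrix κ ι ℝ) (F : Matrix κ ρ ℝ)
    (g : κ → ℝ) (a : ι → ℝ) (β : ℝ) (hfeas : ∃ x y, 0 ≤ y ∧ E *ᵥ x + F *ᵥ y = g)
    (hle : ∀ x y, 0 ≤ y → E *ᵥ x + F *ᵥ y = g → a ⬝ᵥ x ≤ β) :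
    ∃ μ : κ → ℝ, μ ᵥ* E = a ∧ 0 ≤ μ ᵥ* F ∧ μ ⬝ᵥ g ≤ β := by
  obtain ⟨x₀, y₀, hy₀, hxy₀⟩ := hfeas
  have hhom : ∀ x y (t : ℝ), 0 ≤ y → 0 ≤ t → E *ᵥ x + F *ᵥ y = t • g → a ⬝ᵥ x ≤ t * β := by
    intro x y t hy ht hxy
    rcases ht.eq_or_lt with rfl | ht
    · -- `(x, y)` is a recession direction of the feasible set, so `a ⬝ᵥ x ≤ 0`.
      rw [zero_smul] at hxy
      rw [zero_mul]
      refine nonpos_of_forall_add_mul_le (c := a ⬝ᵥ x₀) (β := β) fun s hs => ?_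
      have := hle (x₀ + s • x) (y₀ + s • y) (add_nonneg hy₀ (smul_nonneg hs hy)) (by
        rw [mulVec_add, mulVec_add, mulVec_smul, mulVec_smul, add_add_add_comm, ← smul_add, hxy,
          smul_zero, add_zero, hxy₀])
      simpa [dotProduct_add, dotProduct_smul] using this
    · have := hle (t⁻¹ • x) (t⁻¹ • y) (smul_nonneg (inv_nonneg.2 ht.le) hy) (by
        rw [mulVec_smul, mulVec_smul, ← smul_add, hxy, smul_smul, inv_mul_cancel₀ ht.ne', one_smul])
      rwa [dotProduct_smul, smul_eq_mul, inv_mul_le_iff₀ ht] at this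
  obtain ⟨μ, hμE, hμF⟩ := exists_vecMul_eq_and_le_vecMul E (fromCols F (replicateCol Unit (-g))) a
      (Sum.elim 0 fun _ => -β) fun x y hy hxy => by
    have hcol : replicateCol Unit (-g) *ᵥ (y ∘ .inr) = -(y (.inr ()) • g) := by
      ext; simp [mulVec, dotProduct, replicateCol_apply, mul_comm]
    rw [fromCols_mulVec, ← add_assoc, hcol, ← sub_eq_add_neg, sub_eq_zero] at hxy
    have := hhom x (y ∘ .inl) (y (.inr ())) (fun k => hy _) (hy _) hxy
    rw [← Sum.elim_comp_inl_inr y, sumElim_dotProduct_sumElim]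
    simp [dotProduct] at this ⊢
    linarith
  exact ⟨μ, hμE, fun k => by simpa using hμF (.inl k),
    by simpa [vecMul, dotProduct, replicateCol_apply] using hμF (.inr ())⟩

end Matrix

theorem nnegRank_mul_add_vecMulVec_le {α β : Type*} [Fintype α] [Fintype β] {r : ℕ}
    {T : Matrix α (Fin r) ℝ} {U : Matrix (Fin r) β ℝ} {s : α → ℝ} {t : β → ℝ}
    (hT : ∀ i k, 0 ≤ T i k) (hU : ∀ k j, 0 ≤ U k j) (hs : 0 ≤ s) (ht : 0 ≤ t) :
    nnegRank (T * U + vecMulVec s t) ≤ r + 1 := by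
  refine Nat.sInf_le ⟨of fun i => (Fin.snoc (T i) (s i) : Fin (r + 1) → ℝ),
    of fun k j => (Fin.snoc (Uᵀ j) (t j) : Fin (r + 1) → ℝ) k,
    fun i k => ?_, fun k j => ?_, ?_⟩
  · exact Fin.lastCases (by simpa using hs i) (fun k => by simpa using hT i k) k
  · exact Fin.lastCases (by simpa using ht j) (fun k => by simpa using hU k j) k
  · ext i j
    simp [mul_apply, Fin.sum_univ_castSucc, vecMulVec_apply]

/-- If the system `E x + F y = g`, `y ≥ 0` (with `y ∈ ℝ^r`) projects to a set `K`
with `P = conv{v_1,…,v_n} ⊆ K ⊆ Q = {x : A x ≤ b}`, then the slack matrix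
`S^{P,Q}(i,j) = b_i − A_i v_j` admits a nonnegative factorization of rank at most
`r + 1`; i.e. `nnegrk(S^{P,Q}) ≤ xc(P,Q) + 1`. -/
theorem nnegRank_slack_le_xc_succ {d m n r p : ℕ}
    (A : Matrix (Fin m) (Fin d) ℝ) (b : Fin m → ℝ) (v : Fin n → Fin d → ℝ)
    (E : Matrix (Fin p) (Fin d) ℝ) (F : Matrix (Fin p) (Fin r) ℝ) (g : Fin p → ℝ)
    (hPK : ∀ j, ∃ y : Fin r → ℝ, (∀ k, 0 ≤ y k) ∧ E.mulVec (v j) + F.mulVec y = g)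
    (hKQ : ∀ x : Fin d → ℝ,
      (∃ y : Fin r → ℝ, (∀ k, 0 ≤ y k) ∧ E.mulVec x + F.mulVec y = g) →
      ∀ i, A.mulVec x i ≤ b i) :
    nnegRank (Matrix.of fun i j => b i - A.mulVec (v j) i) ≤ r + 1 := by
  rcases isEmpty_or_nonempty (Fin n) with hn | ⟨⟨j₀⟩⟩
  · convert nnegRank_mul_add_vecMulVec_le (T := (0 : Matrix (Fin m) (Fin r) ℝ))
      (U := (0 : Matrix (Fin r) (Fin n) ℝ)) (s := 0) (t := 0)
      (fun _ _ => le_rfl) (fun _ _ => le_rfl) le_rfl le_rfl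
    exact Subsingleton.elim _ _
  choose y hy₀ hy using hPK
  have hcert (i : Fin m) : ∃ μ : Fin p → ℝ, μ ᵥ* E = A i ∧ 0 ≤ μ ᵥ* F ∧ μ ⬝ᵥ g ≤ b i :=
    exists_vecMul_eq_of_forall_dotProduct_le E F g (A i) (b i) ⟨v j₀, y j₀, hy₀ j₀, hy j₀⟩
      fun x y' hy' hxy => hKQ x ⟨y', hy', hxy⟩ i
  choose μ hμE hμF hμg using hcert
  have hslack (i j) : (A *ᵥ v j) i = μ i ⬝ᵥ g - (μ i ᵥ* F) ⬝ᵥ y j := by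
    change A i ⬝ᵥ v j = _
    rw [← hy j, dotProduct_add, dotProduct_mulVec, dotProduct_mulVec, hμE, add_sub_cancel_right]
  convert nnegRank_mul_add_vecMulVec_le (T := of fun i => μ i ᵥ* F) (U := of fun k j => y j k)
    (s := fun i => b i - μ i ⬝ᵥ g) (t := 1) (fun i => hμF i) (fun k j => hy₀ j k)
    (fun i => sub_nonneg.2 (hμg i)) zero_le_one
  ext i j
  simp only [of_apply, Matrix.add_apply, mul_apply, vecMulVec_apply, hslack, Pi.one_apply,
    mul_one, dotProduct]
  ring
end

section
/- Suppose for some constants c > 0 and C, for every nonnegative rank-1 matrix X on index set (A ∪ B) the corruption bound (1−ε)·E[X | A] − E[X | B] ≤ ‖X‖_∞ · 2^{−cε²ℓ + C log ℓ} holds. If M is a nonnegative matrix with E[M | A] = ρ, E[M | B] = ρ − 1, and ‖M restricted to A ∪ B‖_∞ ≤ ρ, then the nonnegative rank r of M satisfies r ≥ (1/ρ − ε) · 2^{cε²ℓ − C log ℓ}. -/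
/-! Each of the `r` nonnegative rank-one terms of `M` is dominated by `M`, hence bounded by `ρ`
on `A ∪ B`, so the corruption bound applies to it with `N = ρ`. Averages are linear, so summing
these `r` bounds gives `(1 - ε)ρ - (ρ - 1) ≤ r ρ 2^{-t}` with `t = cε²ℓ - C log ℓ`, which
rearranges to the claim. -/

/-- The average of `X` over a finite index set `A` (expectation under the uniform
distribution on `A`). -/
noncomputable def avgOn {γ : Type*} (A : Finset γ) (X : γ → ℝ) : ℝ :=
  (∑ p ∈ A, X p) / A.card

lemma avgOn_finset_sum {γ ι : Type*} (A : Finset γ) (s : Finset ι) (X : ι → γ → ℝ) :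
    avgOn A (fun p => ∑ k ∈ s, X k p) = ∑ k ∈ s, avgOn A (X k) := by
  simp only [avgOn, Finset.sum_div]
  exact Finset.sum_comm

lemma corruption_finset_sum_le {γ ι : Type*} (A B : Finset γ) (s : Finset ι)
    (X : ι → γ → ℝ) (a δ : ℝ) (h : ∀ k ∈ s, a * avgOn A (X k) - avgOn B (X k) ≤ δ) :
    a * avgOn A (fun p => ∑ k ∈ s, X k p) - avgOn B (fun p => ∑ k ∈ s, X k p)
      ≤ s.card * δ := by
  rw [avgOn_finset_sum, avgOn_finset_sum, Finset.mul_sum, ← Finset.sum_sub_distrib,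
    ← nsmul_eq_mul]
  exact Finset.sum_le_card_nsmul s _ δ h

lemma div_sub_mul_le_of_one_sub_mul_le {ρ ε T r : ℝ} (hρ : 0 < ρ) (hT : 0 < T)
    (h : 1 - ε * ρ ≤ r * (ρ * T⁻¹)) : (1 / ρ - ε) * T ≤ r := by
  rw [div_sub' hρ.ne', div_mul_eq_mul_div, div_le_iff₀ hρ]
  rw [← mul_assoc, ← div_eq_mul_inv, le_div_iff₀ hT] at h
  linarith

theorem nnegRank_lower_bound_from_corruption_general {α β : Type*} [DecidableEq α] [DecidableEq β]
    (A B : Finset (α × β))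
    (c C ℓ ε ρ : ℝ) (hρ : 0 < ρ)
    (hcor : ∀ (u : α → ℝ) (w : β → ℝ), (∀ x, 0 ≤ u x) → (∀ y, 0 ≤ w y) →
      ∀ N : ℝ, (∀ p ∈ A ∪ B, u p.1 * w p.2 ≤ N) →
      (1 - ε) * avgOn A (fun p => u p.1 * w p.2) - avgOn B (fun p => u p.1 * w p.2)
        ≤ N * (2:ℝ) ^ (-(c * ε ^ 2 * ℓ) + C * Real.logb 2 ℓ))
    (r : ℕ) (f : Fin r → α → ℝ) (g : Fin r → β → ℝ)
    (hf : ∀ k x, 0 ≤ f k x) (hg : ∀ k y, 0 ≤ g k y)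
    (M : α × β → ℝ) (hM : ∀ p, M p = ∑ k, f k p.1 * g k p.2)
    (hMA : avgOn A M = ρ) (hMB : avgOn B M = ρ - 1)
    (hMmax : ∀ p ∈ A ∪ B, M p ≤ ρ) :
    (1 / ρ - ε) * (2:ℝ) ^ (c * ε ^ 2 * ℓ - C * Real.logb 2 ℓ) ≤ r := by
  set t := c * ε ^ 2 * ℓ - C * Real.logb 2 ℓ
  have hterm_le : ∀ k, ∀ p ∈ A ∪ B, f k p.1 * g k p.2 ≤ ρ := fun k p hp =>
    calc f k p.1 * g k p.2 ≤ M p := hM p ▸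
          Finset.single_le_sum (fun j _ => mul_nonneg (hf j _) (hg j _)) (Finset.mem_univ k)
      _ ≤ ρ := hMmax p hp
  have hsum := corruption_finset_sum_le A B Finset.univ (fun k p => f k p.1 * g k p.2)
    (1 - ε) (ρ * (2:ℝ) ^ (-t)) fun k _ => by
      convert hcor (f k) (g k) (hf k) (hg k) ρ (hterm_le k) using 3
      ring
  rw [← funext hM, hMA, hMB, Finset.card_univ, Fintype.card_fin,
    Real.rpow_neg zero_le_two] at hsum
  exact div_sub_mul_le_of_one_sub_mul_le hρ (by positivity) (by linarith)

/-- Suppose that for every nonnegative rank-1 matrix `X = u ⊗ w` on the index set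
`A ∪ B` the corruption bound
`(1−ε)·E[X | A] − E[X | B] ≤ ‖X‖_∞ · 2^{−cε²ℓ + C log ℓ}` holds. If `M` is a
nonnegative matrix, written as a sum of `r` nonnegative rank-1 matrices, with
`E[M | A] = ρ`, `E[M | B] = ρ − 1` and `‖M restricted to A ∪ B‖_∞ ≤ ρ`, then
`r ≥ (1/ρ − ε) · 2^{cε²ℓ − C log ℓ}`. -/
theorem nnegRank_lower_bound_from_corruption {α β : Type*} [Fintype α] [Fintype β] [DecidableEq α] [DecidableEq β]
    (A B : Finset (α × β)) (hdisj : Disjoint A B) (hA : A.Nonempty) (hB : B.Nonempty)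
    (c C ℓ ε ρ : ℝ) (hc : 0 < c) (hε : 0 < ε) (hρ : 0 < ρ)
    (hcor : ∀ (u : α → ℝ) (w : β → ℝ), (∀ x, 0 ≤ u x) → (∀ y, 0 ≤ w y) →
      ∀ N : ℝ, (∀ p ∈ A ∪ B, u p.1 * w p.2 ≤ N) →
      (1 - ε) * avgOn A (fun p => u p.1 * w p.2) - avgOn B (fun p => u p.1 * w p.2)
        ≤ N * (2:ℝ) ^ (-(c * ε ^ 2 * ℓ) + C * Real.logb 2 ℓ))
    (r : ℕ) (f : Fin r → α → ℝ) (g : Fin r → β → ℝ)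
    (hf : ∀ k x, 0 ≤ f k x) (hg : ∀ k y, 0 ≤ g k y)
    (M : α × β → ℝ) (hM : ∀ p, M p = ∑ k, f k p.1 * g k p.2)
    (hMA : avgOn A M = ρ) (hMB : avgOn B M = ρ - 1)
    (hMmax : ∀ p ∈ A ∪ B, M p ≤ ρ) :
    (1 / ρ - ε) * (2:ℝ) ^ (c * ε ^ 2 * ℓ - C * Real.logb 2 ℓ) ≤ r :=
  nnegRank_lower_bound_from_corruption_general A B c C ℓ ε ρ hρ hcor r f g hf hg M hM hMA hMB hMmax
end

section
/- For every graph G on vertex set contained in [n] and every b ∈ {0,1}^n, ⟨w^G, b·bᵀ⟩ ≤ ω(G), with equality attained when b is the characteristic vector of a maximum clique of G. Hence max over x ∈ COR(n) of ⟨w^G, x⟩ equals the clique number ω(G). -/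
open Classical in
/-- The weight matrix `w^G` of a graph `G` with vertex set `V ⊆ [n]`. -/
noncomputable def wG (n : ℕ) (V : Finset (Fin n)) (G : SimpleGraph (Fin n)) :
    Matrix (Fin n) (Fin n) ℝ := fun i j =>
  if i = j then (if i ∈ V then 1 else 0)
  else if i ∈ V ∧ j ∈ V ∧ ¬G.Adj i j then -1 else 0

/-- The clique number of `G` restricted to the vertex set `V`. -/
noncomputable def cliqueNum (n : ℕ) (V : Finset (Fin n)) (G : SimpleGraph (Fin n)) : ℕ :=
  sSup {k : ℕ | ∃ s : Finset (Fin n), ↑s ⊆ (V : Set (Fin n)) ∧ G.IsClique ↑s ∧ s.card = k}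

/-- The correlation polytope `COR(n) = conv{b·bᵀ : b ∈ {0,1}ⁿ}`. -/
noncomputable def corPolytope (n : ℕ) : Set (Matrix (Fin n) (Fin n) ℝ) :=
  convexHull ℝ {x | ∃ b : Fin n → Bool, x = Matrix.vecMulVec (bvec b) (bvec b)}

/-! For `X = {i | b i}` the value `⟨w^G, b bᵀ⟩` is `∑_{i,j ∈ X} w^G_{ij}`. Deleting from `X` a
vertex outside `V` does not change it, and deleting an endpoint `v` of a non-edge `uv` inside
`X ∩ V` strictly increases it, because the entries in the row and column of `v` sum to at most
`-1` each while `w^G_{vv} = 1`. Hence the value is bounded by its value on some clique `X ⊆ V`,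
which is `|X| ≤ ω(G)`. A linear functional attains its maximum over `COR(n)` at a vertex
`b bᵀ`. -/

theorem Matrix.IsSymm.sum_sum_eq_sum_sum_erase {ι R : Type*} [CommSemiring R] [DecidableEq ι]
    {w : Matrix ι ι R} (hw : w.IsSymm) {S : Finset ι} {v : ι} (hv : v ∈ S) :
    ∑ i ∈ S, ∑ j ∈ S, w i j
      = ∑ i ∈ S.erase v, ∑ j ∈ S.erase v, w i j + 2 * ∑ j ∈ S.erase v, w v j
          + w v v := by
  have split : ∀ f : ι → R, ∑ i ∈ S, f i = ∑ i ∈ S.erase v, f i + f v :=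
    fun f => (Finset.sum_erase_add S f hv).symm
  simp_rw [split (w _), split fun i => ∑ j ∈ S.erase v, w i j + w i v, Finset.sum_add_distrib,
    hw.apply v]
  ring

theorem isLinearMap_sum_sum_mul {ι : Type*} [Fintype ι] (w : Matrix ι ι ℝ) :
    IsLinearMap ℝ fun x : Matrix ι ι ℝ => ∑ i, ∑ j, w i j * x i j where
  map_add x y := by
    simp only [Matrix.add_apply, mul_add, Finset.sum_add_distrib]
  map_smul c x := by
    simp only [Matrix.smul_apply, smul_eq_mul, Finset.mul_sum]
    exact Finset.sum_congr rfl fun i _ => Finset.sum_congr rfl fun j _ => by ring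

theorem IsLinearMap.isGreatest_convexHull {E : Type*} [AddCommGroup E] [Module ℝ E]
    {f : E → ℝ} (hf : IsLinearMap ℝ f) {s : Set E} {c : ℝ} (hle : ∀ x ∈ s, f x ≤ c)
    (hc : ∃ x ∈ s, f x = c) :
    IsGreatest {t | ∃ x ∈ convexHull ℝ s, t = f x} c := by
  obtain ⟨x₀, hx₀, rfl⟩ := hc
  refine ⟨⟨x₀, subset_convexHull ℝ s hx₀, rfl⟩, ?_⟩
  rintro t ⟨x, hx, rfl⟩
  exact convexHull_min hle (convex_halfSpace_le hf _) hx

theorem sum_sum_mul_vecMulVec_bvec {n : ℕ} (w : Matrix (Fin n) (Fin n) ℝ)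
    (b : Fin n → Bool) :
    ∑ i, ∑ j, w i j * Matrix.vecMulVec (bvec b) (bvec b) i j
      = ∑ i ∈ Finset.univ.filter (b · = true),
          ∑ j ∈ Finset.univ.filter (b · = true), w i j := by
  simp only [Finset.sum_filter, Matrix.vecMulVec_apply, bvec]
  refine Finset.sum_congr rfl fun i _ => ?_
  split_ifs <;> simp [mul_ite]

section WeightMatrix

variable {n : ℕ} {V : Finset (Fin n)} {G : SimpleGraph (Fin n)}

theorem wG_isSymm : (wG n V G).IsSymm := by
  ext i j
  by_cases hij : i = j
  · subst hij; rfl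
  · simp only [Matrix.transpose_apply, wG, hij, Ne.symm hij, if_false]
    congr 1
    rw [G.adj_comm]
    exact propext and_left_comm

theorem wG_apply_self {i : Fin n} (hi : i ∈ V) : wG n V G i i = 1 := by simp [wG, hi]

theorem wG_apply_of_notMem_left {i j : Fin n} (hi : i ∉ V) : wG n V G i j = 0 := by
  unfold wG; split_ifs <;> simp_all

theorem wG_apply_of_adj {i j : Fin n} (h : G.Adj i j) : wG n V G i j = 0 := by
  simp [wG, G.ne_of_adj h, h]

theorem wG_apply_of_not_adj {i j : Fin n} (hij : i ≠ j) (hi : i ∈ V) (hj : j ∈ V)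
    (h : ¬G.Adj i j) : wG n V G i j = -1 := by
  simp [wG, hij, hi, hj, h]

theorem wG_apply_nonpos {i j : Fin n} (hij : i ≠ j) : wG n V G i j ≤ 0 := by
  rw [wG, if_neg hij]; split_ifs <;> norm_num

theorem sum_wG_le_neg_one {T : Finset (Fin n)} {u v : Fin n} (hu : u ∈ T) (hv : v ∉ T)
    (huV : u ∈ V) (hvV : v ∈ V) (h : ¬G.Adj v u) : ∑ j ∈ T, wG n V G v j ≤ -1 := by
  rw [← Finset.sum_erase_add T _ hu,
    wG_apply_of_not_adj (ne_of_mem_of_not_mem hu hv).symm hvV huV h]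
  have : ∑ j ∈ T.erase u, wG n V G v j ≤ 0 := Finset.sum_nonpos fun j hj =>
    wG_apply_nonpos (ne_of_mem_of_not_mem (Finset.mem_of_mem_erase hj) hv).symm
  linarith

theorem sum_sum_wG_erase_of_notMem {S : Finset (Fin n)} {v : Fin n} (hv : v ∈ S)
    (hvV : v ∉ V) :
    ∑ i ∈ S, ∑ j ∈ S, wG n V G i j
      = ∑ i ∈ S.erase v, ∑ j ∈ S.erase v, wG n V G i j := by
  simp [wG_isSymm.sum_sum_eq_sum_sum_erase hv, wG_apply_of_notMem_left hvV]

theorem sum_sum_wG_lt_erase {S : Finset (Fin n)} {u v : Fin n} (hu : u ∈ S) (hv : v ∈ S)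
    (huv : u ≠ v) (huV : u ∈ V) (hvV : v ∈ V) (h : ¬G.Adj v u) :
    ∑ i ∈ S, ∑ j ∈ S, wG n V G i j
      < ∑ i ∈ S.erase v, ∑ j ∈ S.erase v, wG n V G i j := by
  have hrow := sum_wG_le_neg_one (Finset.mem_erase.2 ⟨huv, hu⟩) (S.notMem_erase v) huV hvV h
  rw [wG_isSymm.sum_sum_eq_sum_sum_erase hv, wG_apply_self hvV]
  linarith

theorem sum_sum_wG_of_isClique {S : Finset (Fin n)} (hSV : S ⊆ V)
    (hS : G.IsClique (S : Set (Fin n))) :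
    ∑ i ∈ S, ∑ j ∈ S, wG n V G i j = S.card := by
  have hrow : ∀ i ∈ S, ∑ j ∈ S, wG n V G i j = 1 := fun i hi => by
    rw [Finset.sum_eq_single_of_mem i hi fun j hj hji => wG_apply_of_adj (hS hi hj hji.symm),
      wG_apply_self (hSV hi)]
  simp [Finset.sum_congr rfl hrow]

end WeightMatrix

section CliqueNumber

variable {n : ℕ} {V : Finset (Fin n)} {G : SimpleGraph (Fin n)}

theorem bddAbove_cliqueSizes :
    BddAbove
      {k : ℕ | ∃ s : Finset (Fin n), ↑s ⊆ (V : Set (Fin n)) ∧ G.IsClique ↑s ∧ s.card = k} :=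
  ⟨n, by rintro k ⟨s, -, -, rfl⟩; simpa using s.card_le_univ⟩

theorem card_le_cliqueNum {s : Finset (Fin n)} (hsV : s ⊆ V)
    (hs : G.IsClique (s : Set (Fin n))) :
    s.card ≤ cliqueNum n V G :=
  le_csSup bddAbove_cliqueSizes ⟨s, Finset.coe_subset.2 hsV, hs, rfl⟩

theorem exists_isClique_card_eq_cliqueNum :
    ∃ s ⊆ V, G.IsClique (s : Set (Fin n)) ∧ s.card = cliqueNum n V G := by
  obtain ⟨s, hsV, hs, hcard⟩ : cliqueNum n V G ∈ _ :=
    Nat.sSup_mem ⟨0, ∅, by simp, by simp, rfl⟩ bddAbove_cliqueSizes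
  exact ⟨s, Finset.coe_subset.1 hsV, hs, hcard⟩

theorem sum_sum_wG_le_cliqueNum (S : Finset (Fin n)) :
    ∑ i ∈ S, ∑ j ∈ S, wG n V G i j ≤ cliqueNum n V G := by
  induction S using Finset.strongInduction with
  | H S ih =>
    by_cases hSV : S ⊆ V
    · by_cases hS : G.IsClique (S : Set (Fin n))
      · rw [sum_sum_wG_of_isClique hSV hS]
        exact_mod_cast card_le_cliqueNum hSV hS
      · obtain ⟨v, hv, u, hu, hvu, h⟩ : ∃ v ∈ S, ∃ u ∈ S, v ≠ u ∧ ¬G.Adj v u := by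
          simpa [SimpleGraph.isClique_iff, Set.Pairwise] using hS
        exact (sum_sum_wG_lt_erase hu hv hvu.symm (hSV hu) (hSV hv) h).le.trans
          (ih _ (Finset.erase_ssubset hv))
    · obtain ⟨v, hv, hvV⟩ := Finset.not_subset.1 hSV
      exact (sum_sum_wG_erase_of_notMem hv hvV).le.trans (ih _ (Finset.erase_ssubset hv))

end CliqueNumber

theorem max_wG_over_cor_eq_cliqueNum_general (n : ℕ) (V : Finset (Fin n)) (G : SimpleGraph (Fin n)) :
    (∀ b : Fin n → Bool,
      ∑ i, ∑ j, wG n V G i j * Matrix.vecMulVec (bvec b) (bvec b) i j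
        ≤ (cliqueNum n V G : ℝ)) ∧
    (∃ b : Fin n → Bool,
      ∑ i, ∑ j, wG n V G i j * Matrix.vecMulVec (bvec b) (bvec b) i j
        = (cliqueNum n V G : ℝ)) ∧
    IsGreatest {t : ℝ | ∃ x ∈ corPolytope n, t = ∑ i, ∑ j, wG n V G i j * x i j}
      (cliqueNum n V G : ℝ) := by
  have hle : ∀ b : Fin n → Bool,
      ∑ i, ∑ j, wG n V G i j * Matrix.vecMulVec (bvec b) (bvec b) i j ≤ cliqueNum n V G :=
    fun b => by rw [sum_sum_mul_vecMulVec_bvec]; exact sum_sum_wG_le_cliqueNum _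
  obtain ⟨s, hsV, hs, hcard⟩ := exists_isClique_card_eq_cliqueNum (V := V) (G := G)
  have heq : ∑ i, ∑ j, wG n V G i j * Matrix.vecMulVec (bvec (· ∈ s)) (bvec (· ∈ s)) i j
      = cliqueNum n V G := by
    rw [sum_sum_mul_vecMulVec_bvec, ← hcard, ← sum_sum_wG_of_isClique hsV hs]
    simp
  refine ⟨hle, ⟨_, heq⟩, (isLinearMap_sum_sum_mul _).isGreatest_convexHull ?_ ?_⟩
  · rintro _ ⟨b, rfl⟩
    exact hle b
  · exact ⟨_, ⟨_, rfl⟩, heq⟩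

/-- For every graph `G` on a vertex set contained in `[n]` and every `b ∈ {0,1}ⁿ`,
`⟨w^G, b·bᵀ⟩ ≤ ω(G)`, with equality attained for the characteristic vector of a
maximum clique; hence the maximum of `⟨w^G, x⟩` over the correlation polytope
`COR(n)` equals the clique number `ω(G)`. -/
theorem max_wG_over_cor_eq_cliqueNum (n : ℕ) (V : Finset (Fin n)) (G : SimpleGraph (Fin n))
    (hG : ∀ i j, G.Adj i j → i ∈ V ∧ j ∈ V) :
    (∀ b : Fin n → Bool,
      ∑ i, ∑ j, wG n V G i j * Matrix.vecMulVec (bvec b) (bvec b) i j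
        ≤ (cliqueNum n V G : ℝ)) ∧
    (∃ b : Fin n → Bool,
      ∑ i, ∑ j, wG n V G i j * Matrix.vecMulVec (bvec b) (bvec b) i j
        = (cliqueNum n V G : ℝ)) ∧
    IsGreatest {t : ℝ | ∃ x ∈ corPolytope n, t = ∑ i, ∑ j, wG n V G i j * x i j}
      (cliqueNum n V G : ℝ) :=
  max_wG_over_cor_eq_cliqueNum_general n V G
end

section
/- Let ρ ≥ 1 and let Q = {x ∈ ℝ^{n×n} : ⟨2·diag(a) − a·aᵀ, x⟩ ≤ 1 for all a ∈ {0,1}^n}. If S ⊆ Q and x lies in the closed (ρ−1)-neighborhood of S in the ℓ₁-norm on ℝ^{n×n}, then x ∈ ρQ. In other words, S^{ρ−1} ⊆ ρQ. -/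
/-- The matrix `2·diag(a) − a·aᵀ` for `a ∈ {0,1}ⁿ`. -/
noncomputable def qMat {n : ℕ} (a : Fin n → Bool) : Matrix (Fin n) (Fin n) ℝ :=
  (2:ℝ) • Matrix.diagonal (bvec a) - Matrix.vecMulVec (bvec a) (bvec a)

lemma qMat_abs_le_one {n : ℕ} (a : Fin n → Bool) (i j : Fin n) : |qMat a i j| ≤ 1 := by
  simp only [qMat, bvec, Matrix.sub_apply, Matrix.smul_apply, Matrix.diagonal_apply,
    Matrix.vecMulVec_apply, smul_eq_mul]
  split_ifs <;> simp_all; norm_num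

section HolderBound

variable {m n : Type*} [Fintype m] [Fintype n] {A : Matrix m n ℝ}

lemma sum_mul_le_sum_abs_of_abs_le_one (hA : ∀ i j, |A i j| ≤ 1) (D : Matrix m n ℝ) :
    ∑ i, ∑ j, A i j * D i j ≤ ∑ i, ∑ j, |D i j| := by
  gcongr with i _ j _
  calc A i j * D i j ≤ |A i j * D i j| := le_abs_self _
    _ = |A i j| * |D i j| := abs_mul _ _
    _ ≤ |D i j| := mul_le_of_le_one_left (abs_nonneg _) (hA i j)

lemma sum_mul_le_sum_mul_add_sum_abs_sub (hA : ∀ i j, |A i j| ≤ 1) (x x₀ : Matrix m n ℝ) :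
    ∑ i, ∑ j, A i j * x i j ≤ ∑ i, ∑ j, A i j * x₀ i j + ∑ i, ∑ j, |x i j - x₀ i j| := by
  have hsplit : ∑ i, ∑ j, A i j * x i j
      = ∑ i, ∑ j, A i j * x₀ i j + ∑ i, ∑ j, A i j * (x i j - x₀ i j) := by
    simp only [mul_sub, Finset.sum_sub_distrib]
    ring
  rw [hsplit]
  exact add_le_add_right (sum_mul_le_sum_abs_of_abs_le_one hA (x - x₀)) _

end HolderBound

theorem neighborhood_subset_dilate_general (n : ℕ) (ρ : ℝ)
    (S : Set (Matrix (Fin n) (Fin n) ℝ))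
    (hSQ : ∀ x₀ ∈ S, ∀ a : Fin n → Bool, ∑ i, ∑ j, qMat a i j * x₀ i j ≤ 1)
    (x : Matrix (Fin n) (Fin n) ℝ)
    (hx : ∃ x₀ ∈ S, ∑ i, ∑ j, |x i j - x₀ i j| ≤ ρ - 1) :
    ∀ a : Fin n → Bool, ∑ i, ∑ j, qMat a i j * x i j ≤ ρ := by
  intro a
  obtain ⟨x₀, hx₀S, hdist⟩ := hx
  linarith [hSQ x₀ hx₀S a, sum_mul_le_sum_mul_add_sum_abs_sub (qMat_abs_le_one a) x x₀]

/-- Let `ρ ≥ 1` and `Q = {x : ⟨2·diag(a) − a·aᵀ, x⟩ ≤ 1 for all a ∈ {0,1}ⁿ}`.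
If `S ⊆ Q` and `x` lies in the closed `(ρ−1)`-neighborhood of `S` in the entrywise
`ℓ₁`-norm, then `x ∈ ρQ`, i.e. `⟨2·diag(a) − a·aᵀ, x⟩ ≤ ρ` for all `a`. -/
theorem neighborhood_subset_dilate (n : ℕ) (ρ : ℝ) (hρ : 1 ≤ ρ)
    (S : Set (Matrix (Fin n) (Fin n) ℝ))
    (hSQ : ∀ x₀ ∈ S, ∀ a : Fin n → Bool, ∑ i, ∑ j, qMat a i j * x₀ i j ≤ 1)
    (x : Matrix (Fin n) (Fin n) ℝ)
    (hx : ∃ x₀ ∈ S, ∑ i, ∑ j, |x i j - x₀ i j| ≤ ρ - 1) :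
    ∀ a : Fin n → Bool, ∑ i, ∑ j, qMat a i j * x i j ≤ ρ :=
  neighborhood_subset_dilate_general n ρ S hSQ x hx
end

section
/- Let n ≡ 3 (mod 4), ℓ = (n+1)/4, and let T = (T₁, T₂, {i}) be a uniformly random partition of [n] into sets of sizes 2ℓ−1, 2ℓ−1, 1. Conditioned on T, let a be a uniform ℓ-subset of T₁ ∪ {i} and b an independent uniform ℓ-subset of T₂ ∪ {i}. Then P(i ∈ a and i ∈ b) = 1/4, and conditioned on this event (resp. its complement), (a,b) is uniform on the set B of pairs of ℓ-subsets intersecting in exactly one element (resp. uniform on the set A of disjoint pairs of ℓ-subsets). -/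
/-
Complementing `a` inside the `2ℓ`-element set `T₁ ∪ {i}` is an involution of the sample space
that toggles `i ∈ a`, and likewise for `b`; so `i ∈ a` and `i ∈ b` each halve the sample space
independently. Since `T₁`, `T₂`, `{i}` are disjoint, `a ∩ b ⊆ {i}`: the pair lies in `B` exactly
when `i ∈ a ∩ b` and in `A` otherwise. The sample space and both events are invariant under
permutations of `[n]`, and any two pairs in `A` (or in `B`) are related by such a permutation, so
all fibres over `A` (or over `B`) have the same size; they are nonempty because `T₁` and `T₂` can
be grown around `a \ {i}` and `b \ {i}`.
-/

/-- The sample space: tuples `(T₁, T₂, i, a, b)` where `(T₁, T₂, {i})` is a partition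
of `[n]` into sets of sizes `2ℓ−1, 2ℓ−1, 1`, `a` is an `ℓ`-subset of `T₁ ∪ {i}` and
`b` is an `ℓ`-subset of `T₂ ∪ {i}`.  The joint distribution described in the paper
(uniform partition, then `a`, `b` uniform and independent given the partition) is the
uniform distribution on this set, since all fibers have equal size. -/
def sampleSpace (n ℓ : ℕ) :
    Finset (Finset (Fin n) × Finset (Fin n) × Fin n × Finset (Fin n) × Finset (Fin n)) :=
  Finset.univ.filter fun t =>
    t.1.card = 2 * ℓ - 1 ∧ t.2.1.card = 2 * ℓ - 1 ∧ Disjoint t.1 t.2.1 ∧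
    t.2.2.1 ∉ t.1 ∧ t.2.2.1 ∉ t.2.1 ∧
    t.2.2.2.1 ⊆ insert t.2.2.1 t.1 ∧ t.2.2.2.1.card = ℓ ∧
    t.2.2.2.2 ⊆ insert t.2.2.1 t.2.1 ∧ t.2.2.2.2.card = ℓ

open Finset

theorem exists_perm_comp_eq_of_card_fiber {α β : Type*} [Fintype α] [DecidableEq β]
    (f g : α → β) (h : ∀ b, #{a | f a = b} = #{a | g a = b}) :
    ∃ σ : Equiv.Perm α, ∀ a, g (σ a) = f a :=
  ⟨Equiv.ofFiberEquiv fun b => Fintype.equivOfCardEq (by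
    simpa only [Fintype.card_subtype] using h b), Equiv.ofFiberEquiv_map _⟩

theorem exists_perm_map_eq_map_eq {α : Type*} [Fintype α] [DecidableEq α]
    {x y x' y' : Finset α} (hx : #x = #x') (hy : #y = #y') (hxy : #(x ∩ y) = #(x' ∩ y')) :
    ∃ σ : Equiv.Perm α, x.map σ.toEmbedding = x' ∧ y.map σ.toEmbedding = y' := by
  have hfib : ∀ b : Bool × Bool, #{a | (decide (a ∈ x), decide (a ∈ y)) = b} =
      #{a | (decide (a ∈ x'), decide (a ∈ y')) = b} := by
    have hx' := card_inter_add_card_sdiff x y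
    have hy' := card_inter_add_card_sdiff y x
    have hu := card_inter_add_card_union x y
    have hx'' := card_inter_add_card_sdiff x' y'
    have hy'' := card_inter_add_card_sdiff y' x'
    have hu' := card_inter_add_card_union x' y'
    rw [inter_comm] at hy' hy''
    have h₁ (s t : Finset α) : ({a | a ∈ s ∧ a ∈ t} : Finset α) = s ∩ t := by ext; simp
    have h₂ (s t : Finset α) : ({a | a ∈ s ∧ a ∉ t} : Finset α) = s \ t := by ext; simp
    have h₃ (s t : Finset α) : ({a | a ∉ s ∧ a ∈ t} : Finset α) = t \ s := by ext; simp [and_comm]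
    have h₄ (s t : Finset α) : ({a | a ∉ s ∧ a ∉ t} : Finset α) = (s ∪ t)ᶜ := by ext; simp
    rintro ⟨_ | _, _ | _⟩ <;> simp only [Prod.mk.injEq, decide_eq_true_eq, decide_eq_false_iff_not,
      h₁, h₂, h₃, h₄, card_compl] <;> omega
  obtain ⟨σ, hσ⟩ := exists_perm_comp_eq_of_card_fiber _ _ hfib
  simp only [Prod.mk.injEq, decide_eq_decide] at hσ
  refine ⟨σ, ?_, ?_⟩ <;> ext a <;> simp [← hσ (σ.symm a)]

theorem two_mul_card_filter_of_involution {α : Type*} {s : Finset α} {p : α → Prop}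
    [DecidablePred p] (f : α → α) (hf : ∀ a ∈ s, f a ∈ s) (hff : ∀ a ∈ s, f (f a) = a)
    (hp : ∀ a ∈ s, p (f a) ↔ ¬p a) : 2 * #(s.filter p) = #s := by
  have : #(s.filter p) = #(s.filter (¬p ·)) :=
    card_nbij' f f (fun a ha => by simp_all) (fun a ha => by simp_all)
      (fun a ha => hff a (mem_filter.1 ha).1) (fun a ha => hff a (mem_filter.1 ha).1)
  have := card_filter_add_card_filter_not (s := s) p
  omega

theorem sdiff_mem_powersetCard {α : Type*} [DecidableEq α] {s a : Finset α} {k : ℕ}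
    (hs : #s = 2 * k) (ha : a ∈ s.powersetCard k) : s \ a ∈ s.powersetCard k := by
  rw [mem_powersetCard] at *
  exact ⟨sdiff_subset, by rw [card_sdiff_of_subset ha.1, hs, ha.2]; omega⟩

abbrev SampleTuple (n : ℕ) :=
  Finset (Fin n) × Finset (Fin n) × Fin n × Finset (Fin n) × Finset (Fin n)

namespace SampleTuple

variable {n ℓ : ℕ}

theorem mem_sampleSpace_iff {t : SampleTuple n} : t ∈ sampleSpace n ℓ ↔
    #t.1 = 2 * ℓ - 1 ∧ #t.2.1 = 2 * ℓ - 1 ∧ Disjoint t.1 t.2.1 ∧ t.2.2.1 ∉ t.1 ∧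
      t.2.2.1 ∉ t.2.1 ∧ t.2.2.2.1 ∈ (insert t.2.2.1 t.1).powersetCard ℓ ∧
      t.2.2.2.2 ∈ (insert t.2.2.1 t.2.1).powersetCard ℓ := by
  simp [sampleSpace, mem_powersetCard, and_assoc]

theorem card_insert_of_mem_sampleSpace (hℓ : 1 ≤ ℓ) {t : SampleTuple n}
    (ht : t ∈ sampleSpace n ℓ) :
    #(insert t.2.2.1 t.1) = 2 * ℓ ∧ #(insert t.2.2.1 t.2.1) = 2 * ℓ := by
  obtain ⟨h₁, h₂, -, hi₁, hi₂, -⟩ := mem_sampleSpace_iff.1 ht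
  rw [card_insert_of_notMem hi₁, card_insert_of_notMem hi₂, h₁, h₂]
  omega

def complementA (t : SampleTuple n) : SampleTuple n :=
  (t.1, t.2.1, t.2.2.1, insert t.2.2.1 t.1 \ t.2.2.2.1, t.2.2.2.2)

def complementB (t : SampleTuple n) : SampleTuple n :=
  (t.1, t.2.1, t.2.2.1, t.2.2.2.1, insert t.2.2.1 t.2.1 \ t.2.2.2.2)

theorem complementA_mem (hℓ : 1 ≤ ℓ) {t : SampleTuple n} (ht : t ∈ sampleSpace n ℓ) :
    complementA t ∈ sampleSpace n ℓ := by
  have hcard := (card_insert_of_mem_sampleSpace hℓ ht).1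
  obtain ⟨h₁, h₂, h, hi₁, hi₂, ha, hb⟩ := mem_sampleSpace_iff.1 ht
  exact mem_sampleSpace_iff.2 ⟨h₁, h₂, h, hi₁, hi₂, sdiff_mem_powersetCard hcard ha, hb⟩

theorem complementB_mem (hℓ : 1 ≤ ℓ) {t : SampleTuple n} (ht : t ∈ sampleSpace n ℓ) :
    complementB t ∈ sampleSpace n ℓ := by
  have hcard := (card_insert_of_mem_sampleSpace hℓ ht).2
  obtain ⟨h₁, h₂, h, hi₁, hi₂, ha, hb⟩ := mem_sampleSpace_iff.1 ht
  exact mem_sampleSpace_iff.2 ⟨h₁, h₂, h, hi₁, hi₂, ha, sdiff_mem_powersetCard hcard hb⟩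

theorem complementA_complementA {t : SampleTuple n} (ht : t ∈ sampleSpace n ℓ) :
    complementA (complementA t) = t := by
  obtain ⟨-, -, -, -, -, ha, -⟩ := mem_sampleSpace_iff.1 ht
  simp only [complementA, Finset.sdiff_sdiff_eq_self (mem_powersetCard.1 ha).1]

theorem complementB_complementB {t : SampleTuple n} (ht : t ∈ sampleSpace n ℓ) :
    complementB (complementB t) = t := by
  obtain ⟨-, -, -, -, -, -, hb⟩ := mem_sampleSpace_iff.1 ht
  simp only [complementB, Finset.sdiff_sdiff_eq_self (mem_powersetCard.1 hb).1]

theorem four_mul_card_filter_mem_mem (hℓ : 1 ≤ ℓ) :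
    4 * #{t ∈ sampleSpace n ℓ | t.2.2.1 ∈ t.2.2.2.1 ∧ t.2.2.1 ∈ t.2.2.2.2}
      = #(sampleSpace n ℓ) := by
  have hA : 2 * #{t ∈ sampleSpace n ℓ | t.2.2.1 ∈ t.2.2.2.1} = #(sampleSpace n ℓ) :=
    two_mul_card_filter_of_involution complementA (fun _ => complementA_mem hℓ)
      (fun _ => complementA_complementA) (fun _ _ => by simp [complementA])
  have hB : 2 * #{t ∈ {t ∈ sampleSpace n ℓ | t.2.2.1 ∈ t.2.2.2.1} | t.2.2.1 ∈ t.2.2.2.2}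
      = #{t ∈ sampleSpace n ℓ | t.2.2.1 ∈ t.2.2.2.1} :=
    two_mul_card_filter_of_involution complementB
      (fun t ht => by
        rw [mem_filter] at ht ⊢
        exact ⟨complementB_mem hℓ ht.1, ht.2⟩)
      (fun t ht => complementB_complementB (mem_filter.1 ht).1)
      (fun _ _ => by simp [complementB])
  rw [filter_filter] at hB
  omega

theorem inter_subset_singleton {t : SampleTuple n} (ht : t ∈ sampleSpace n ℓ) :
    t.2.2.2.1 ∩ t.2.2.2.2 ⊆ {t.2.2.1} := by
  obtain ⟨-, -, h, -, -, ha, hb⟩ := mem_sampleSpace_iff.1 ht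
  intro z hz
  obtain ⟨hza, hzb⟩ := mem_inter.1 hz
  have hza := (mem_powersetCard.1 ha).1 hza
  have hzb := (mem_powersetCard.1 hb).1 hzb
  rw [mem_insert] at hza hzb
  rw [mem_singleton]
  rcases hza with hza | hza
  · exact hza
  rcases hzb with hzb | hzb
  · exact hzb
  exact absurd hzb (disjoint_left.1 h hza)

theorem card_inter_eq_one_of_mem_of_mem {t : SampleTuple n} (ht : t ∈ sampleSpace n ℓ)
    (hi : t.2.2.1 ∈ t.2.2.2.1 ∧ t.2.2.1 ∈ t.2.2.2.2) : #(t.2.2.2.1 ∩ t.2.2.2.2) = 1 := by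
  rw [subset_antisymm (inter_subset_singleton ht) (singleton_subset_iff.2 (mem_inter.2 hi)),
    card_singleton]

theorem disjoint_of_not_mem_and_mem {t : SampleTuple n} (ht : t ∈ sampleSpace n ℓ)
    (hi : ¬(t.2.2.1 ∈ t.2.2.2.1 ∧ t.2.2.1 ∈ t.2.2.2.2)) : Disjoint t.2.2.2.1 t.2.2.2.2 := by
  rw [disjoint_iff_inter_eq_empty]
  rcases subset_singleton_iff.1 (inter_subset_singleton ht) with h | h
  · exact h
  · exact absurd (mem_inter.1 (h ▸ mem_singleton_self _)) hi

def permMap (σ : Equiv.Perm (Fin n)) (t : SampleTuple n) : SampleTuple n :=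
  let e := σ.toEmbedding
  (t.1.map e, t.2.1.map e, e t.2.2.1, t.2.2.2.1.map e, t.2.2.2.2.map e)

def perm (σ : Equiv.Perm (Fin n)) : SampleTuple n ≃ SampleTuple n where
  toFun := permMap σ
  invFun := permMap σ.symm
  left_inv t := by simp [permMap, map_map]
  right_inv t := by simp [permMap, map_map]

theorem perm_mem_sampleSpace_iff (σ : Equiv.Perm (Fin n)) {t : SampleTuple n} :
    perm σ t ∈ sampleSpace n ℓ ↔ t ∈ sampleSpace n ℓ := by
  simp only [mem_sampleSpace_iff, perm, Equiv.coe_fn_mk, permMap, ← map_insert, card_map,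
    disjoint_map, mem_map', mem_powersetCard, map_subset_map]

theorem card_filter_map_eq (E : SampleTuple n → Prop) [DecidablePred E]
    (hE : ∀ σ t, E (perm σ t) ↔ E t) (σ : Equiv.Perm (Fin n)) (x y : Finset (Fin n)) :
    #{t ∈ sampleSpace n ℓ | E t ∧ t.2.2.2.1 = x ∧ t.2.2.2.2 = y} =
      #{t ∈ sampleSpace n ℓ | E t ∧ t.2.2.2.1 = x.map σ.toEmbedding ∧
        t.2.2.2.2 = y.map σ.toEmbedding} :=
  card_equiv (perm σ) fun t => by
    simp only [mem_filter, perm_mem_sampleSpace_iff, hE]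
    simp [perm, permMap]

theorem exists_mem_sampleSpace (hℓ : 1 ≤ ℓ) (hn : 4 * ℓ - 1 ≤ n) {x y : Finset (Fin n)}
    (hx : #x = ℓ) (hy : #y = ℓ) {i : Fin n} (hxy : x ∩ y ⊆ {i}) :
    ∃ T₁ T₂, (T₁, T₂, i, x, y) ∈ sampleSpace n ℓ := by
  have hx' : x.erase i ⊆ (insert i y)ᶜ := fun z hz => by
    obtain ⟨hzi, hzx⟩ := mem_erase.1 hz
    simp only [mem_compl, mem_insert, not_or]
    exact ⟨hzi, fun hzy => hzi (mem_singleton.1 (hxy (mem_inter.2 ⟨hzx, hzy⟩)))⟩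
  obtain ⟨T₁, hxT₁, hT₁, hT₁c⟩ := exists_subsuperset_card_eq hx' (n := 2 * ℓ - 1)
    (by grind [card_erase_le]) (by grind [card_compl, card_insert_le, Fintype.card_fin])
  have hiT₁ : i ∉ T₁ := fun h => mem_compl.1 (hT₁ h) (mem_insert_self i y)
  have hy' : y.erase i ⊆ (insert i T₁)ᶜ := fun z hz => by
    obtain ⟨hzi, hzy⟩ := mem_erase.1 hz
    simp only [mem_compl, mem_insert, not_or]
    exact ⟨hzi, fun hzT₁ => mem_compl.1 (hT₁ hzT₁) (mem_insert_of_mem hzy)⟩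
  obtain ⟨T₂, hyT₂, hT₂, hT₂c⟩ := exists_subsuperset_card_eq hy' (n := 2 * ℓ - 1)
    (by grind [card_erase_le]) (by grind [card_compl, card_insert_of_notMem, Fintype.card_fin])
  refine ⟨T₁, T₂, mem_sampleSpace_iff.2 ⟨hT₁c, hT₂c, ?_, hiT₁, fun h => ?_, ?_, ?_⟩⟩
  · exact disjoint_left.2 fun z hz hz' => mem_compl.1 (hT₂ hz') (mem_insert_of_mem hz)
  · exact mem_compl.1 (hT₂ h) (mem_insert_self i T₁)
  · exact mem_powersetCard.2 ⟨subset_insert_iff.2 hxT₁, hx⟩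
  · exact mem_powersetCard.2 ⟨subset_insert_iff.2 hyT₂, hy⟩

theorem exists_card_filter_eq_const (E : SampleTuple n → Prop) [DecidablePred E]
    (hE : ∀ σ t, E (perm σ t) ↔ E t) (m : ℕ)
    (hpos : ∀ x y : Finset (Fin n), #x = ℓ → #y = ℓ → #(x ∩ y) = m →
      0 < #{t ∈ sampleSpace n ℓ | E t ∧ t.2.2.2.1 = x ∧ t.2.2.2.2 = y}) :
    ∃ k, 0 < k ∧ ∀ x y : Finset (Fin n), #x = ℓ → #y = ℓ → #(x ∩ y) = m →
      #{t ∈ sampleSpace n ℓ | E t ∧ t.2.2.2.1 = x ∧ t.2.2.2.2 = y} = k := by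
  by_cases h : ∃ x₀ y₀ : Finset (Fin n), #x₀ = ℓ ∧ #y₀ = ℓ ∧ #(x₀ ∩ y₀) = m
  · obtain ⟨x₀, y₀, hx₀, hy₀, hm₀⟩ := h
    refine ⟨_, hpos x₀ y₀ hx₀ hy₀ hm₀, fun x y hx hy hm => ?_⟩
    obtain ⟨σ, rfl, rfl⟩ := exists_perm_map_eq_map_eq (x := x₀) (y := y₀) (x' := x) (y' := y)
      (by omega) (by omega) (by omega)
    exact (card_filter_map_eq E hE σ x₀ y₀).symm
  · simp only [not_exists, not_and] at h
    exact ⟨1, one_pos, fun x y hx hy hm => absurd hm (h x y hx hy)⟩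

theorem card_filter_mem_mem_pos (hℓ : 1 ≤ ℓ) (hn : 4 * ℓ - 1 ≤ n) {x y : Finset (Fin n)}
    (hx : #x = ℓ) (hy : #y = ℓ) (hxy : #(x ∩ y) = 1) :
    0 < #{t ∈ sampleSpace n ℓ |
      (t.2.2.1 ∈ t.2.2.2.1 ∧ t.2.2.1 ∈ t.2.2.2.2) ∧ t.2.2.2.1 = x ∧ t.2.2.2.2 = y} := by
  obtain ⟨i, hi⟩ := card_eq_one.1 hxy
  obtain ⟨T₁, T₂, hT⟩ := exists_mem_sampleSpace hℓ hn hx hy hi.subset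
  exact card_pos.2 ⟨(T₁, T₂, i, x, y),
    mem_filter.2 ⟨hT, mem_inter.1 (hi ▸ mem_singleton_self i), rfl, rfl⟩⟩

theorem card_filter_not_mem_mem_pos (hℓ : 1 ≤ ℓ) (hn : 4 * ℓ - 1 ≤ n) {x y : Finset (Fin n)}
    (hx : #x = ℓ) (hy : #y = ℓ) (hxy : #(x ∩ y) = 0) :
    0 < #{t ∈ sampleSpace n ℓ |
      ¬(t.2.2.1 ∈ t.2.2.2.1 ∧ t.2.2.1 ∈ t.2.2.2.2) ∧ t.2.2.2.1 = x ∧ t.2.2.2.2 = y} := by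
  obtain ⟨i, -, hi⟩ := exists_mem_notMem_of_card_lt_card (s := x ∪ y) (t := univ)
    (by grind [card_union_le, card_univ, Fintype.card_fin])
  obtain ⟨T₁, T₂, hT⟩ := exists_mem_sampleSpace hℓ hn hx hy
    (by rw [card_eq_zero.1 hxy]; exact empty_subset _)
  exact card_pos.2 ⟨(T₁, T₂, i, x, y),
    mem_filter.2 ⟨hT, fun h => hi (mem_union_left _ h.1), rfl, rfl⟩⟩

end SampleTuple

open SampleTuple in
/-- Let `n ≡ 3 (mod 4)`, `ℓ = (n+1)/4`, and pick a uniformly random partition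
`(T₁, T₂, {i})` of `[n]` into sizes `2ℓ−1, 2ℓ−1, 1`; conditioned on it, let `a` be a
uniform `ℓ`-subset of `T₁ ∪ {i}` and `b` an independent uniform `ℓ`-subset of
`T₂ ∪ {i}`.  Then `P(i ∈ a and i ∈ b) = 1/4`; on this event `(a, b)` lies in `B`
(barely intersecting pairs) and its conditional distribution is uniform on `B`,
while on the complementary event `(a, b)` lies in `A` (disjoint pairs) with uniform
conditional distribution on `A`. -/
theorem udisj_distribution (n ℓ : ℕ) (hn : n % 4 = 3) (hℓ : ℓ = (n + 1) / 4) :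
    -- P(i ∈ a ∧ i ∈ b) = 1/4
    4 * ((sampleSpace n ℓ).filter fun t => t.2.2.1 ∈ t.2.2.2.1 ∧ t.2.2.1 ∈ t.2.2.2.2).card
      = (sampleSpace n ℓ).card ∧
    -- on the event, (a,b) ∈ B; off the event, (a,b) ∈ A
    (∀ t ∈ sampleSpace n ℓ,
      ((t.2.2.1 ∈ t.2.2.2.1 ∧ t.2.2.1 ∈ t.2.2.2.2) →
        (t.2.2.2.1.card = ℓ ∧ t.2.2.2.2.card = ℓ ∧ (t.2.2.2.1 ∩ t.2.2.2.2).card = 1)) ∧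
      (¬(t.2.2.1 ∈ t.2.2.2.1 ∧ t.2.2.1 ∈ t.2.2.2.2) →
        (t.2.2.2.1.card = ℓ ∧ t.2.2.2.2.card = ℓ ∧ Disjoint t.2.2.2.1 t.2.2.2.2))) ∧
    -- conditioned on the event, (a,b) is uniform on B
    (∃ k : ℕ, 0 < k ∧ ∀ x y : Finset (Fin n),
      x.card = ℓ → y.card = ℓ → (x ∩ y).card = 1 →
      ((sampleSpace n ℓ).filter fun t =>
        (t.2.2.1 ∈ t.2.2.2.1 ∧ t.2.2.1 ∈ t.2.2.2.2) ∧ t.2.2.2.1 = x ∧ t.2.2.2.2 = y).card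
        = k) ∧
    -- conditioned on the complementary event, (a,b) is uniform on A
    (∃ k : ℕ, 0 < k ∧ ∀ x y : Finset (Fin n),
      x.card = ℓ → y.card = ℓ → Disjoint x y →
      ((sampleSpace n ℓ).filter fun t =>
        ¬(t.2.2.1 ∈ t.2.2.2.1 ∧ t.2.2.1 ∈ t.2.2.2.2) ∧ t.2.2.2.1 = x ∧ t.2.2.2.2 = y).card
        = k) := by
  have hℓ₁ : 1 ≤ ℓ := by omega
  have hn₄ : 4 * ℓ - 1 ≤ n := by omega
  refine ⟨four_mul_card_filter_mem_mem hℓ₁, fun t ht => ?_, ?_, ?_⟩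
  · obtain ⟨-, -, -, -, -, ha, hb⟩ := mem_sampleSpace_iff.1 ht
    exact ⟨fun hi => ⟨(mem_powersetCard.1 ha).2, (mem_powersetCard.1 hb).2,
        card_inter_eq_one_of_mem_of_mem ht hi⟩,
      fun hi => ⟨(mem_powersetCard.1 ha).2, (mem_powersetCard.1 hb).2,
        disjoint_of_not_mem_and_mem ht hi⟩⟩
  · exact exists_card_filter_eq_const _ (fun σ t => by simp [perm, permMap]) 1
      fun x y hx hy => card_filter_mem_mem_pos hℓ₁ hn₄ hx hy
  · obtain ⟨k, hk, h⟩ := exists_card_filter_eq_const _ (fun σ t => by simp [perm, permMap]) 0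
      fun x y hx hy => card_filter_not_mem_mem_pos hℓ₁ hn₄ hx hy
    exact ⟨k, hk, fun x y hx hy hxy => h x y hx hy (by rw [disjoint_iff_inter_eq_empty.1 hxy,
      card_empty])⟩
end
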